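/- arXiv:2201.11524 — 6 statements merged into one kernel-verified Lean document; each statement's English description precedes it below -/
import Mathlib

section
/- Let (X_f)_{f∈F} be an independent family of ℕ-valued random variables indexed by a finite set F on a probability space (Ω,P), let A be a finite set, and let ν : A × F → ℕ. Assume that for every f ∈ F and every exponent m with m ≤ 2·max_{a∈A} ν(a,f), the real-valued random variable X_f^m is integrable. Let N := ∑_{a∈A} ∏_{f∈F} X_f^{ν(a,f)}. Then N is square-integrable and Var(N) = ∑_{a∈A} ( ∏_{f∈F} E[X_f^{2ν(a,f)}] − ∏_{f∈F} (E[X_f^{ν(a,f)}])² ) + ∑_{a₁≠a₂, a₁,a₂∈A} ( ∏_{f∈F} E[X_f^{ν(a₁,f)+ν(a₂,f)}] − ∏_{f∈F} E[X_f^{ν(a₁,f)}] · ∏_{f∈F} E[X_f^{ν(a₂,f)}] ), where E[·] denotes the (real-valued) Bochner integral and Var(N) = E[N²] − (E[N])². -/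
/-!
Write `N = ∑ₐ Zₐ` with `Zₐ = ∏_f X_f ^ ν(a, f)`. Then `Var N = ∑_{a,b} Cov(Zₐ, Z_b)`, and by
independence `E[Zₐ Z_b] = ∏_f E[X_f ^ (ν(a, f) + ν(b, f))]` and `E[Zₐ] = ∏_f E[X_f ^ ν(a, f)]`.
All exponents occurring are at most `2 · maxₐ ν(a, f)`, so each `Zₐ` is square-integrable.
Splitting the pairs `(a, b)` into the diagonal and the off-diagonal gives the formula.
-/

open MeasureTheory ProbabilityTheory Finset

theorem Finset.sum_sum_eq_sum_add_sum_offDiag {ι M : Type*} [DecidableEq ι] [AddCommMonoid M]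
    (s : Finset ι) (g : ι → ι → M) :
    ∑ i ∈ s, ∑ j ∈ s, g i j = ∑ i ∈ s, g i i + ∑ p ∈ s.offDiag, g p.1 p.2 := by
  rw [← sum_product' (f := g), ← diag_union_offDiag, sum_union (disjoint_diag_offDiag s),
    sum_diag]

section

variable {Ω : Type*} [MeasurableSpace Ω] {P : Measure Ω}

theorem ProbabilityTheory.iIndepFun.integrable_fun_finsetProd {ι 𝕜 : Type*} [RCLike 𝕜]
    {Y : ι → Ω → 𝕜} (hY : iIndepFun Y P) (hmeas : ∀ i, Measurable (Y i))
    (hint : ∀ i, Integrable (Y i) P) (s : Finset ι) :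
    Integrable (fun ω ↦ ∏ i ∈ s, Y i ω) P := by
  classical
  have := hY.isProbabilityMeasure
  induction s using Finset.induction_on with
  | empty => simp
  | @insert i s hi ih =>
    simp_rw [prod_insert hi]
    have hindep := (hY.indepFun_finsetProd_of_notMem hmeas hi).symm
    rw [prod_fn] at hindep
    exact hindep.integrable_mul (hint i) ih

theorem integral_sq_sub_sq_integral_fun_sum [IsProbabilityMeasure P] {ι : Type*} [Fintype ι]
    {Z : ι → Ω → ℝ} (hZ : ∀ i, MemLp (Z i) 2 P) :
    (∫ ω, (∑ i, Z i ω) ^ 2 ∂P) - (∫ ω, ∑ i, Z i ω ∂P) ^ 2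
      = ∑ i, ∑ j, ((∫ ω, Z i ω * Z j ω ∂P) - (∫ ω, Z i ω ∂P) * ∫ ω, Z j ω ∂P) := by
  have h := variance_fun_sum (μ := P) hZ
  rw [variance_eq_sub (memLp_finsetSum _ fun i _ ↦ hZ i)] at h
  simpa [covariance_eq_sub (hZ _) (hZ _)] using h

section

variable {F : Type*} {Y : F → Ω → ℝ} (k : F → ℕ)

theorem ProbabilityTheory.iIndepFun.fun_pow (hY : iIndepFun Y P) :
    iIndepFun (fun f ω ↦ Y f ω ^ k f) P :=
  hY.comp (fun f y ↦ y ^ k f) fun _ ↦ measurable_id.pow_const _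

theorem ProbabilityTheory.iIndepFun.integrable_fun_prod_pow (hY : iIndepFun Y P)
    (hmeas : ∀ f, Measurable (Y f)) (hk : ∀ f, Integrable (fun ω ↦ Y f ω ^ k f) P)
    (s : Finset F) :
    Integrable (fun ω ↦ ∏ f ∈ s, Y f ω ^ k f) P :=
  (hY.fun_pow k).integrable_fun_finsetProd (fun f ↦ (hmeas f).pow_const _) hk s

theorem ProbabilityTheory.iIndepFun.integral_fun_prod_pow [Fintype F] (hY : iIndepFun Y P)
    (hmeas : ∀ f, Measurable (Y f)) :
    ∫ ω, ∏ f, Y f ω ^ k f ∂P = ∏ f, ∫ ω, Y f ω ^ k f ∂P :=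
  (hY.fun_pow k).integral_fun_prod_eq_prod_integral
    fun f ↦ ((hmeas f).pow_const _).aestronglyMeasurable

end

end

/-- Lemma A.3: variance of the answer count `N = ∑_{a∈A} ∏_{f∈F} X_f^{ν(a,f)}`
of a Boolean conjunctive query over a tuple-independent bag PDB, assuming all
needed moments (up to order `2·max_a ν(a,f)` for each fact `f`) are finite. -/
theorem variance_sum_prod_pow
    {Ω : Type*} [MeasurableSpace Ω] (P : Measure Ω) [IsProbabilityMeasure P]
    {F : Type*} [Fintype F] {A : Type*} [Fintype A] [DecidableEq A]
    (X : F → Ω → ℕ) (hX : ∀ f, Measurable (X f))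
    (hind : iIndepFun X P)
    (ν : A × F → ℕ)
    (hmom : ∀ f : F, ∀ m : ℕ, m ≤ 2 * (Finset.univ.sup fun a : A => ν (a, f)) →
      Integrable (fun ω => ((X f ω : ℝ)) ^ m) P)
    (N : Ω → ℝ) (hN : N = fun ω => ∑ a : A, ∏ f : F, ((X f ω : ℝ)) ^ ν (a, f)) :
    MemLp N 2 P ∧
    (∫ ω, N ω ^ 2 ∂P) - (∫ ω, N ω ∂P) ^ 2
      = (∑ a : A,
            ((∏ f : F, ∫ ω, ((X f ω : ℝ)) ^ (2 * ν (a, f)) ∂P)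
              - ∏ f : F, (∫ ω, ((X f ω : ℝ)) ^ ν (a, f) ∂P) ^ 2))
        + ∑ p ∈ Finset.univ.filter (fun p : A × A => p.1 ≠ p.2),
            ((∏ f : F, ∫ ω, ((X f ω : ℝ)) ^ (ν (p.1, f) + ν (p.2, f)) ∂P)
              - (∏ f : F, ∫ ω, ((X f ω : ℝ)) ^ ν (p.1, f) ∂P)
                * (∏ f : F, ∫ ω, ((X f ω : ℝ)) ^ ν (p.2, f) ∂P)) := by
  subst hN
  set Z : A → Ω → ℝ := fun a ω ↦ ∏ f, (X f ω : ℝ) ^ ν (a, f)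
  have hind_real : iIndepFun (fun f ω ↦ (X f ω : ℝ)) P :=
    hind.comp (fun _ (n : ℕ) ↦ (n : ℝ)) fun _ ↦ measurable_from_top
  have hX_real : ∀ f, Measurable fun ω ↦ (X f ω : ℝ) := fun f ↦ measurable_from_top.comp (hX f)
  have hZ_mul : ∀ a b, (fun ω ↦ Z a ω * Z b ω)
      = fun ω ↦ ∏ f, (X f ω : ℝ) ^ (ν (a, f) + ν (b, f)) := fun a b ↦ by
    ext ω
    simp only [Z, ← prod_mul_distrib, pow_add]
  have hZ_memLp : ∀ a, MemLp (Z a) 2 P := fun a ↦ by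
    refine (memLp_two_iff_integrable_sq ?_).2 ?_
    · exact (Finset.measurable_prod _ fun f _ ↦ (hX_real f).pow_const _).aestronglyMeasurable
    · simp_rw [Z, ← prod_pow, ← pow_mul']
      exact hind_real.integrable_fun_prod_pow _ hX_real
        (fun f ↦ hmom f _ (Nat.mul_le_mul_left 2 (le_sup (f := fun a ↦ ν (a, f)) (mem_univ a))))
        univ
  refine ⟨memLp_finsetSum _ fun a _ ↦ hZ_memLp a, ?_⟩
  rw [integral_sq_sub_sq_integral_fun_sum hZ_memLp, sum_sum_eq_sum_add_sum_offDiag]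
  simp only [Z, hZ_mul, hind_real.integral_fun_prod_pow _ hX_real]
  congr 1
  · simp only [two_mul, sq, prod_mul_distrib]
  · congr 1
    ext p
    simp
end

section
/- Let X₁, X₂, X₃, … be i.i.d. ℕ-valued random variables on a probability space (Ω,P), let k ∈ ℕ, and let p₀ := P(X₁ = 0). Then there exist real numbers y₁, …, y_k ≥ 0 such that for all n ∈ ℕ: P( ∑_{i=1}^{n} X_i ≤ k ) = p₀^n + ∑_{j=1}^{k} C(n,j) · p₀^{n−j} · y_j, where C(n,j) is the binomial coefficient (equal to 0 for j > n). -/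
/-!
The generating function of `∑_{i<n} X i` is `F ^ n`, where `F = Q + p₀` is the generating
function of `X 0` and `Q` has nonnegative coefficients and no constant term. Expanding
`(Q + p₀) ^ n` binomially gives the formula with `y j` the sum of the coefficients of `Q ^ j` of
degree at most `k`; terms with `j > k` vanish because `Q ^ j` has order at least `j`.
-/

open MeasureTheory ProbabilityTheory Finset PowerSeries

namespace PowerSeries

theorem coeff_pow_nonneg {R : Type*} [CommSemiring R] [PartialOrder R] [IsOrderedRing R]
    {φ : R⟦X⟧} (hφ : ∀ m, 0 ≤ coeff m φ) (j m : ℕ) : 0 ≤ coeff m (φ ^ j) := by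
  rw [coeff_pow]
  exact sum_nonneg fun l _ => prod_nonneg fun i _ => hφ _

theorem sum_coeff_pow_add_C {R : Type*} [CommSemiring R] {q : R⟦X⟧} (hq : constantCoeff q = 0)
    (a : R) (n k : ℕ) :
    ∑ m ∈ range (k + 1), coeff m ((q + C a) ^ n)
      = ∑ j ∈ range (k + 1),
          n.choose j * a ^ (n - j) * ∑ m ∈ range (k + 1), coeff m (q ^ j) := by
  set g : ℕ → R := fun j => n.choose j * a ^ (n - j) * ∑ m ∈ range (k + 1), coeff m (q ^ j)
  have hsub : ∀ l ≤ n + k, range (l + 1) ⊆ range (n + k + 1) := fun l hl => by gcongr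
  calc ∑ m ∈ range (k + 1), coeff m ((q + C a) ^ n) = ∑ j ∈ range (n + 1), g j := by
        simp only [g, add_pow, map_sum, ← map_pow, mul_sum]
        rw [sum_comm]
        refine sum_congr rfl fun j _ => sum_congr rfl fun m _ => ?_
        rw [← map_natCast (C (R := R)), mul_assoc, ← map_mul, coeff_mul_C]
        ring
    _ = ∑ j ∈ range (n + k + 1), g j := sum_subset (hsub n (by omega)) fun j _ hj => by
        simp [g, Nat.choose_eq_zero_of_lt (show n < j by simpa using hj)]
    _ = ∑ j ∈ range (k + 1), g j := by
        refine (sum_subset (hsub k (by omega)) fun j _ hj => ?_).symm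
        have hkj : k < j := by simpa using hj
        refine mul_eq_zero_of_right _ (sum_eq_zero fun m hm => coeff_of_lt_order _ ?_)
        refine lt_of_lt_of_le ?_ (le_order_pow_of_constantCoeff_eq_zero j hq)
        exact_mod_cast (mem_range.mp hm).trans_le hkj

end PowerSeries

namespace ProbabilityTheory

variable {Ω : Type*} [MeasurableSpace Ω] {P : Measure Ω}

theorem IndepFun.measureReal_add_preimage_singleton {M : Type*} [AddMonoid M] [HasAntidiagonal M]
    [MeasurableSpace M] [MeasurableSingletonClass M] [IsFiniteMeasure P] {X Y : Ω → M}
    (hXY : IndepFun X Y P) (hX : Measurable X) (hY : Measurable Y) (m : M) :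
    P.real ((X + Y) ⁻¹' {m})
      = ∑ p ∈ antidiagonal m, P.real (X ⁻¹' {p.1}) * P.real (Y ⁻¹' {p.2}) := by
  have hfibres :
      (X + Y) ⁻¹' {m} = ⋃ p ∈ antidiagonal m, X ⁻¹' {p.1} ∩ Y ⁻¹' {p.2} := by
    ext ω; simp
  rw [hfibres, measureReal_biUnion_finset]
  · refine sum_congr rfl fun p _ => ?_
    simp only [measureReal_def, hXY.measure_inter_preimage_eq_mul _ _ (measurableSet_singleton _)
      (measurableSet_singleton _), ENNReal.toReal_mul]
  · intro p _ q _ hpq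
    refine Set.disjoint_left.mpr fun ω hp hq => hpq ?_
    simp only [Set.mem_inter_iff, Set.mem_preimage, Set.mem_singleton_iff] at hp hq
    exact Prod.ext (hp.1.symm.trans hq.1) (hp.2.symm.trans hq.2)
  · exact fun p _ => (hX (measurableSet_singleton _)).inter (hY (measurableSet_singleton _))

noncomputable def pgf (X : Ω → ℕ) (P : Measure Ω) : PowerSeries ℝ :=
  PowerSeries.mk fun m => P.real (X ⁻¹' {m})

@[simp]
theorem coeff_pgf (X : Ω → ℕ) (P : Measure Ω) (m : ℕ) :
    coeff m (pgf X P) = P.real (X ⁻¹' {m}) :=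
  coeff_mk _ _

theorem pgf_const [IsProbabilityMeasure P] (c : ℕ) : pgf (fun _ : Ω => c) P = X ^ c := by
  ext m
  by_cases hm : m = c <;> simp [coeff_X_pow, hm, Ne.symm]

theorem exists_pgf_eq_add_C (X : Ω → ℕ) (P : Measure Ω) :
    ∃ q : PowerSeries ℝ, pgf X P = q + C (P.real (X ⁻¹' {0})) ∧ constantCoeff q = 0 ∧
      ∀ m, 0 ≤ coeff m q := by
  have hcoeff_zero : coeff 0 (pgf X P - C (P.real (X ⁻¹' {0}))) = 0 := by
    rw [map_sub, coeff_zero_C, coeff_pgf, sub_self]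
  refine ⟨_, (sub_add_cancel _ _).symm, by rwa [← coeff_zero_eq_constantCoeff_apply],
    fun m => ?_⟩
  rcases eq_or_ne m 0 with rfl | hm
  · exact hcoeff_zero.ge
  · simp [coeff_C, hm, measureReal_nonneg]

theorem IndepFun.pgf_add [IsFiniteMeasure P] {X Y : Ω → ℕ} (hXY : IndepFun X Y P)
    (hX : Measurable X) (hY : Measurable Y) : pgf (X + Y) P = pgf X P * pgf Y P := by
  ext m
  simp [coeff_mul, hXY.measureReal_add_preimage_singleton hX hY]

theorem IdentDistrib.pgf_eq {Ω' : Type*} [MeasurableSpace Ω'] {Q : Measure Ω'} {X : Ω → ℕ}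
    {Y : Ω' → ℕ} (h : IdentDistrib X Y P Q) : pgf X P = pgf Y Q := by
  ext m
  simp [measureReal_def, h.measure_mem_eq (measurableSet_singleton m)]

theorem iIndepFun.pgf_sum_range [IsProbabilityMeasure P] {X : ℕ → Ω → ℕ}
    (hind : iIndepFun X P) (hX : ∀ i, Measurable (X i))
    (hid : ∀ i, IdentDistrib (X i) (X 0) P P) (n : ℕ) :
    pgf (fun ω => ∑ i ∈ range n, X i ω) P = pgf (X 0) P ^ n := by
  induction n with
  | zero => simp [pgf_const]
  | succ n ih =>
    have hindep : IndepFun (fun ω => ∑ i ∈ range n, X i ω) (X n) P := by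
      simpa only [← sum_fn] using hind.indepFun_sum_range_succ hX n
    simp only [sum_range_succ]
    rw [← Pi.add_def, hindep.pgf_add (measurable_sum _ fun i _ => hX i) (hX n), ih,
      (hid n).pgf_eq, pow_succ]

theorem measureReal_le_eq_sum_coeff_pgf [IsFiniteMeasure P] {X : Ω → ℕ} (hX : Measurable X)
    (k : ℕ) : P.real {ω | X ω ≤ k} = ∑ m ∈ range (k + 1), coeff m (pgf X P) := by
  have hIic : {ω | X ω ≤ k} = X ⁻¹' ↑(range (k + 1)) := by
    ext ω; simp
  simp only [hIic, coeff_pgf]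
  exact (sum_measureReal_preimage_singleton _ fun m _ => hX (measurableSet_singleton m)).symm

end ProbabilityTheory

/-- Lemma B.2 (sum_of_indep_copies): for i.i.d. ℕ-valued random variables
`X₀, X₁, …` with `p₀ = P(X₀ = 0)`, there exist nonnegative `y₁, …, y_k` such that
`P(∑_{i<n} X_i ≤ k) = p₀^n + ∑_{j=1}^k C(n,j) p₀^{n-j} y_j` for all `n`. -/
theorem cdf_sum_of_indep_copies
    {Ω : Type*} [MeasurableSpace Ω] (P : Measure Ω) [IsProbabilityMeasure P]
    (X : ℕ → Ω → ℕ) (hX : ∀ i, Measurable (X i))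
    (hind : iIndepFun X P)
    (hid : ∀ i j, IdentDistrib (X i) (X j) P P)
    (k : ℕ) :
    ∃ y : ℕ → ℝ, (∀ j, 1 ≤ j → j ≤ k → 0 ≤ y j) ∧
      ∀ n : ℕ,
        (P {ω | ∑ i ∈ Finset.range n, X i ω ≤ k}).toReal
          = (P {ω | X 0 ω = 0}).toReal ^ n
            + ∑ j ∈ Finset.Icc 1 k,
                (n.choose j : ℝ) * (P {ω | X 0 ω = 0}).toReal ^ (n - j) * y j := by
  obtain ⟨q, hpgf, hq, hq_nonneg⟩ := exists_pgf_eq_add_C (X 0) P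
  refine ⟨fun j => ∑ m ∈ range (k + 1), coeff m (q ^ j),
    fun j _ _ => sum_nonneg fun m _ => coeff_pow_nonneg hq_nonneg j m, fun n => ?_⟩
  rw [← measureReal_def, measureReal_le_eq_sum_coeff_pgf (measurable_sum _ fun i _ => hX i),
    hind.pgf_sum_range hX (fun i => hid i 0), hpgf, sum_coeff_pow_add_C hq,
    sum_range_succ', ← Ico_add_one_right_eq_Icc, sum_Ico_eq_sum_range]
  simp [coeff_one, measureReal_def, Set.preimage, add_comm]
end

section
/- Let Y, X₁, X₂, X₃, … be ℕ-valued random variables on a probability space (Ω,P) such that the whole family (Y, X₁, X₂, …) is mutually independent and X₁, X₂, … are identically distributed. Let k ∈ ℕ, p₀ := P(X₁ = 0), and q₀ := P(Y = 0). Then there exist real numbers z₁, …, z_k ≥ 0 such that for all n ∈ ℕ: P( Y · ∑_{i=1}^{n} X_i ≤ k ) = q₀ + (1 − q₀) · p₀^n + ∑_{j=1}^{k} C(n,j) · p₀^{n−j} · z_j, where C(n,j) is the binomial coefficient (equal to 0 for j > n). -/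
open MeasureTheory ProbabilityTheory Finset

/-!
Write `p x = P(X₁ = x)`, `Sₙ = X₁ + ⋯ + Xₙ` and `uₙ(m) = P(Sₙ ≤ m)`. Conditioning on the last
summand gives `uₙ₊₁ = T uₙ` with `(T f)(m) = ∑_{x ≤ m} p x · f (m - x)`, and `u₀ = 1`. Splitting
off the `x = 0` term, `T = p₀ · 1 + T₊` (`convFrom p 0` and `convFrom p 1` below), and the binomial
theorem for these commuting operators gives `uₙ = ∑ⱼ C(n,j) p₀^(n-j) T₊ʲ 1`, where `T₊ʲ 1 ≥ 0`
vanishes below `j`. Conditioning on `Y = 0`, `Y = y ∈ [1, k]` (where `Y · Sₙ ≤ k ↔ Sₙ ≤ k / y`)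
and `Y > k` (where it forces `Sₙ = 0`) gives the formula with
`z j = ∑_{y=1}^k P(Y = y) (T₊ʲ 1)(k / y)`.
-/

def convFrom (p : ℕ → ℝ) (c : ℕ) : Module.End ℝ (ℕ → ℝ) where
  toFun f m := ∑ x ∈ Icc c m, p x * f (m - x)
  map_add' f g := by ext m; simp [mul_add, sum_add_distrib]
  map_smul' r f := by ext m; simp [mul_sum, mul_left_comm]

section Convolution

variable (p : ℕ → ℝ)

lemma convFrom_apply (c : ℕ) (f : ℕ → ℝ) (m : ℕ) :
    convFrom p c f m = ∑ x ∈ Icc c m, p x * f (m - x) := rfl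

lemma convFrom_zero : convFrom p 0 = algebraMap ℝ _ (p 0) + convFrom p 1 := by
  ext f m
  rw [LinearMap.add_apply, Pi.add_apply, convFrom_apply, convFrom_apply,
    ← insert_Icc_add_one_left_eq_Icc (Nat.zero_le m), sum_insert (by simp)]
  simp [Module.algebraMap_end_apply]

lemma convFrom_zero_pow (n : ℕ) :
    convFrom p 0 ^ n
      = ∑ j ∈ range (n + 1), ((n.choose j : ℝ) * p 0 ^ (n - j)) • convFrom p 1 ^ j := by
  rw [convFrom_zero, add_comm, (Algebra.commute_algebraMap_right (p 0) (convFrom p 1)).add_pow]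
  refine sum_congr rfl fun j _ => ?_
  rw [← map_pow, ← Algebra.commutes, ← Algebra.smul_def, ← Nat.cast_comm, ← nsmul_eq_mul,
    ← Nat.cast_smul_eq_nsmul ℝ, mul_smul]

lemma convFrom_one_pow_apply_of_lt (f : ℕ → ℝ) {j m : ℕ} (h : m < j) :
    (convFrom p 1 ^ j) f m = 0 := by
  induction j generalizing m with
  | zero => omega
  | succ j ih =>
    rw [pow_succ', Module.End.mul_apply, convFrom_apply]
    exact sum_eq_zero fun x hx => by rw [ih (by grind), mul_zero]

lemma convFrom_pow_nonneg (hp : 0 ≤ p) {f : ℕ → ℝ} (hf : 0 ≤ f) (c j : ℕ) :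
    0 ≤ (convFrom p c ^ j) f := by
  induction j with
  | zero => simpa
  | succ j ih =>
    intro m
    rw [pow_succ', Module.End.mul_apply, convFrom_apply]
    exact sum_nonneg fun x _ => mul_nonneg (hp x) (ih _)

lemma convFrom_zero_pow_apply_of_le (n : ℕ) (f : ℕ → ℝ) {m k : ℕ} (hmk : m ≤ k) :
    (convFrom p 0 ^ n) f m
      = p 0 ^ n * f m + ∑ j ∈ Icc 1 k, n.choose j * p 0 ^ (n - j) * (convFrom p 1 ^ j) f m := by
  set g : ℕ → ℝ := fun j => n.choose j * p 0 ^ (n - j) * (convFrom p 1 ^ j) f m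
  have hg : ∀ j, g j ≠ 0 → j ≤ n ∧ j ≤ k := fun j hj => by
    by_contra! h
    refine hj ?_
    by_cases hjn : n < j
    · simp [g, Nat.choose_eq_zero_of_lt hjn]
    · simp [g, convFrom_one_pow_apply_of_lt p f (show m < j by omega)]
  have hrange : ∑ j ∈ range (n + 1), g j = ∑ j ∈ range (k + 1), g j := by
    rw [← sum_filter_ne_zero, ← sum_filter_ne_zero (s := range (k + 1))]
    congr 1
    ext j
    simp only [mem_filter, mem_range]
    grind
  simp only [convFrom_zero_pow, LinearMap.coe_sum, LinearMap.coe_smul, Finset.sum_apply,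
    Pi.smul_apply, smul_eq_mul]
  rw [hrange, Nat.range_succ_eq_Icc_zero, ← insert_Icc_add_one_left_eq_Icc (Nat.zero_le k),
    sum_insert (by simp)]
  simp [g]

end Convolution

section Independence

variable {Ω α β : Type*} [MeasurableSpace Ω] [MeasurableSpace α] [MeasurableSpace β]
  {P : Measure Ω}

lemma ProbabilityTheory.IndepFun.measureReal_inter_preimage_eq_mul {U : Ω → α} {V : Ω → β}
    (h : IndepFun U V P) {A : Set α} {B : Set β} (hA : MeasurableSet A) (hB : MeasurableSet B) :
    P.real (U ⁻¹' A ∩ V ⁻¹' B) = P.real (U ⁻¹' A) * P.real (V ⁻¹' B) := by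
  simp only [measureReal_def, h.measure_inter_preimage_eq_mul A B hA hB, ENNReal.toReal_mul]

lemma measureReal_biUnion_eq_sum_of_indepFun [IsFiniteMeasure P] [MeasurableSingletonClass α]
    {U : Ω → α} {V : Ω → β} (hU : Measurable U) (hV : Measurable V) (h : IndepFun U V P)
    (s : Finset α) {B : α → Set β} (hB : ∀ y, MeasurableSet (B y)) :
    P.real (⋃ y ∈ s, {ω | U ω = y ∧ V ω ∈ B y})
      = ∑ y ∈ s, P.real {ω | U ω = y} * P.real {ω | V ω ∈ B y} := by
  rw [measureReal_biUnion_finset]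
  · exact sum_congr rfl fun y _ =>
      h.measureReal_inter_preimage_eq_mul (measurableSet_singleton y) (hB y)
  · exact fun x _ y _ hxy => Set.disjoint_left.2 fun ω hx hy => hxy (hx.1.symm.trans hy.1)
  · exact fun y _ => (hU (measurableSet_singleton y)).inter (hV (hB y))

variable {U V : Ω → ℕ}

lemma measureReal_add_le_of_indepFun [IsFiniteMeasure P] (hU : Measurable U) (hV : Measurable V)
    (h : IndepFun U V P) (m : ℕ) :
    P.real {ω | U ω + V ω ≤ m}
      = ∑ x ∈ Icc 0 m, P.real {ω | U ω = x} * P.real {ω | V ω ≤ m - x} := by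
  have hsum := measureReal_biUnion_eq_sum_of_indepFun hU hV h (Icc 0 m)
    (B := fun x => Set.Iic (m - x)) fun _ => measurableSet_Iic
  simp only [Set.mem_Iic] at hsum
  rw [← hsum]
  congr 1
  ext ω
  simp only [Set.mem_ofPred_eq, Set.mem_iUnion, mem_Icc, exists_prop]
  exact ⟨fun h => ⟨U ω, ⟨Nat.zero_le _, by omega⟩, rfl, by omega⟩, fun ⟨x, _, hx, hV⟩ => by omega⟩

lemma measureReal_mul_le_of_indepFun [IsProbabilityMeasure P] (hU : Measurable U) (hV : Measurable V)
    (h : IndepFun U V P) (k : ℕ) :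
    P.real {ω | U ω * V ω ≤ k}
      = P.real {ω | U ω = 0} + ∑ y ∈ Icc 1 k, P.real {ω | U ω = y} * P.real {ω | V ω ≤ k / y}
        + P.real {ω | k < U ω} * P.real {ω | V ω = 0} := by
  have hsplit : {ω | U ω * V ω ≤ k}
      = (⋃ y ∈ Icc 0 k, {ω | U ω = y ∧ V ω ∈ {v | y * v ≤ k}}) ∪ {ω | k < U ω ∧ V ω = 0} := by
    ext ω
    simp only [Set.mem_ofPred_eq, Set.mem_union, Set.mem_iUnion, mem_Icc, exists_prop]
    constructor
    · intro hk
      rcases le_or_gt (U ω) k with hUk | hkU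
      · exact .inl ⟨U ω, ⟨Nat.zero_le _, hUk⟩, rfl, hk⟩
      · exact .inr ⟨hkU, by_contra fun hV => by nlinarith [Nat.one_le_iff_ne_zero.2 hV]⟩
    · rintro (⟨y, -, rfl, hy⟩ | ⟨-, hV⟩)
      · exact hy
      · simp [hV]
  have hdisj : Disjoint (⋃ y ∈ Icc 0 k, {ω | U ω = y ∧ V ω ∈ {v | y * v ≤ k}})
      {ω | k < U ω ∧ V ω = 0} := by
    simp only [Set.disjoint_left, Set.mem_iUnion, mem_Icc]
    rintro ω ⟨y, ⟨-, hyk⟩, hy, -⟩ ⟨hk, -⟩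
    omega
  have hlarge : P.real {ω | k < U ω ∧ V ω = 0} = P.real {ω | k < U ω} * P.real {ω | V ω = 0} :=
    h.measureReal_inter_preimage_eq_mul measurableSet_Ioi (measurableSet_singleton 0)
  have hdiv : ∀ y ∈ Icc 1 k, {v | y * v ≤ k} = Set.Iic (k / y) := fun y hy => by
    ext v
    rw [Set.mem_ofPred_eq, Set.mem_Iic, Nat.le_div_iff_mul_le (mem_Icc.1 hy).1, mul_comm]
  rw [hsplit, measureReal_union hdisj ((hU measurableSet_Ioi).inter (hV (measurableSet_singleton 0)))
    (measure_ne_top P _) (measure_ne_top P _), measureReal_biUnion_eq_sum_of_indepFun hU hV h _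
    fun _ => .of_discrete, ← insert_Icc_add_one_left_eq_Icc (Nat.zero_le k), sum_insert (by simp),
    zero_add, hlarge, sum_congr rfl fun y hy => by rw [hdiv y hy]]
  simp

lemma measureReal_zero_add_sum_Icc_add_lt_eq_one [IsProbabilityMeasure P] (hU : Measurable U)
    (k : ℕ) :
    P.real {ω | U ω = 0} + ∑ y ∈ Icc 1 k, P.real {ω | U ω = y} + P.real {ω | k < U ω} = 1 := by
  -- `U * 0 ≤ k` holds everywhere, and a constant is independent of `U`.
  simpa [eq_comm] using
    measureReal_mul_le_of_indepFun hU measurable_const (indepFun_const_right (μ := P) U 0) k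

lemma measureReal_sum_range_le [IsProbabilityMeasure P] {X : ℕ → Ω → ℕ}
    (hX : ∀ i, Measurable (X i)) (hind : iIndepFun X P) (hid : ∀ i, IdentDistrib (X i) (X 0) P P)
    (n m : ℕ) :
    P.real {ω | ∑ i ∈ range n, X i ω ≤ m}
      = (convFrom (fun x => P.real {ω | X 0 ω = x}) 0 ^ n) 1 m := by
  induction n generalizing m with
  | zero => simp
  | succ n ih =>
    have hindep : IndepFun (X n) (fun ω => ∑ i ∈ range n, X i ω) P := by
      simpa [Finset.sum_fn] using (hind.indepFun_finsetSum_of_notMem hX notMem_range_self).symm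
    simp_rw [sum_range_succ, add_comm _ (X n _)]
    rw [measureReal_add_le_of_indepFun (hX n) (by fun_prop) hindep, pow_succ',
      Module.End.mul_apply, convFrom_apply]
    refine sum_congr rfl fun x _ => ?_
    rw [ih]
    congr 1
    exact congrArg ENNReal.toReal ((hid n).measure_mem_eq (measurableSet_singleton x))

end Independence

/-- Lemma 5.9 (sum_of_indep_copies_times_rv): `Z 0 = Y` and `Z (i+1) = X_i` form a
mutually independent family of ℕ-valued random variables, with `X₁, X₂, …` identically
distributed. With `p₀ = P(X₁ = 0)` and `q₀ = P(Y = 0)` there exist nonnegative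
`z₁, …, z_k` with `P(Y·∑_{i<n} X_i ≤ k) = q₀ + (1-q₀) p₀^n + ∑_{j=1}^k C(n,j) p₀^{n-j} z_j`. -/
theorem cdf_rv_times_sum_of_indep_copies
    {Ω : Type*} [MeasurableSpace Ω] (P : Measure Ω) [IsProbabilityMeasure P]
    (Z : ℕ → Ω → ℕ) (hZ : ∀ i, Measurable (Z i))
    (hind : iIndepFun Z P)
    (hid : ∀ i j : ℕ, IdentDistrib (Z (i + 1)) (Z (j + 1)) P P)
    (k : ℕ) :
    ∃ z : ℕ → ℝ, (∀ j, 1 ≤ j → j ≤ k → 0 ≤ z j) ∧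
      ∀ n : ℕ,
        (P {ω | Z 0 ω * ∑ i ∈ Finset.range n, Z (i + 1) ω ≤ k}).toReal
          = (P {ω | Z 0 ω = 0}).toReal
            + (1 - (P {ω | Z 0 ω = 0}).toReal) * (P {ω | Z 1 ω = 0}).toReal ^ n
            + ∑ j ∈ Finset.Icc 1 k,
                (n.choose j : ℝ) * (P {ω | Z 1 ω = 0}).toReal ^ (n - j) * z j := by
  simp only [← measureReal_def]
  set p : ℕ → ℝ := fun x => P.real {ω | Z 1 ω = x}
  set w : ℕ → ℕ → ℝ := fun j => (convFrom p 1 ^ j) 1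
  refine ⟨fun j => ∑ y ∈ Icc 1 k, P.real {ω | Z 0 ω = y} * w j (k / y),
    fun j _ _ => sum_nonneg fun y _ => mul_nonneg measureReal_nonneg
      (convFrom_pow_nonneg p (fun _ => measureReal_nonneg) zero_le_one 1 j _), fun n => ?_⟩
  have hS : ∀ m, P.real {ω | ∑ i ∈ range n, Z (i + 1) ω ≤ m} = (convFrom p 0 ^ n) 1 m :=
    measureReal_sum_range_le (X := fun i => Z (i + 1)) (fun i => hZ _)
      (hind.precomp (add_left_injective 1)) (fun i => hid i 0) n
  have hS0 : P.real {ω | ∑ i ∈ range n, Z (i + 1) ω = 0} = p 0 ^ n := by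
    simpa [convFrom_zero_pow_apply_of_le p n 1 le_rfl] using hS 0
  have hSdiv : ∀ y ∈ Icc 1 k, P.real {ω | ∑ i ∈ range n, Z (i + 1) ω ≤ k / y}
      = p 0 ^ n + ∑ j ∈ Icc 1 k, n.choose j * p 0 ^ (n - j) * w j (k / y) := fun y _ => by
    rw [hS, convFrom_zero_pow_apply_of_le p n 1 (Nat.div_le_self k y)]
    simp [w]
  have hY : IndepFun (Z 0) (fun ω => ∑ i ∈ range n, Z (i + 1) ω) P := by
    simpa [Finset.sum_fn] using (hind.indepFun_finsetSum_of_notMem hZ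
      (s := (range n).map (addRightEmbedding 1)) (i := 0) (by simp)).symm
  have hswap : ∑ y ∈ Icc 1 k, P.real {ω | Z 0 ω = y}
        * ∑ j ∈ Icc 1 k, n.choose j * p 0 ^ (n - j) * w j (k / y)
      = ∑ j ∈ Icc 1 k, n.choose j * p 0 ^ (n - j)
        * ∑ y ∈ Icc 1 k, P.real {ω | Z 0 ω = y} * w j (k / y) := by
    simp only [mul_sum]
    rw [sum_comm]
    exact sum_congr rfl fun _ _ => sum_congr rfl fun _ _ => by ring
  rw [measureReal_mul_le_of_indepFun (hZ 0) (by fun_prop) hY k, hS0,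
    sum_congr rfl fun y hy => by rw [hSdiv y hy]]
  simp only [mul_add, sum_add_distrib]
  rw [hswap, ← sum_mul]
  linear_combination (p 0 ^ n) * measureReal_zero_add_sum_Icc_add_lt_eq_one (P := P) (hZ 0) k
end

section
/- Let k, m ∈ ℕ with m ≥ k, let p > 0 be a real number, and let z₀, z₁, …, z_k be nonnegative real numbers, not all zero; set j* := max{ j ∈ {0,…,k} : z_j ≠ 0 }. For j ∈ ℕ let b_j ∈ ℝ[X] denote the binomial-coefficient polynomial b_j(T) := (1/j!) · ∏_{i=0}^{j−1} (T − i) (so b_j(n) = C(n,j) for n ∈ ℕ). Define the real polynomial H_m := ∑_{j₁=0}^{k} ∑_{j₂=0}^{k} p^{2m−j₁−j₂} · z_{j₁} · z_{j₂} · b_{j₁}(m + X) · b_{j₂}(m − X), where b_{j}(m ± X) means composing b_j with the linear polynomial m ± X. Then H_m has degree 2·j* and its leading coefficient equals (−1)^{j*} · (j*!)^{−2} · p^{2m−2j*} · z_{j*}². -/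
/-!
For `j₁, j₂ ≤ k ≤ m` the weight `p^(2m-j₁-j₂)` splits as `p^(m-j₁) · p^(m-j₂)`, so
`H_m = F(m + X) · F(m - X)` with `F = ∑_j p^(m-j) z_j b_j`. Since `b_j` has degree `j` and
leading coefficient `1/j!`, `F` has degree `j*` and leading coefficient `p^(m-j*) z_{j*} / j*!`;
the substitution `T ↦ m - X` contributes the sign `(-1)^{j*}`.
-/

open Finset Polynomial

/-- The binomial-coefficient polynomial `b_j(T) = (1/j!)·∏_{i<j}(T - i)`,
satisfying `b_j(n) = C(n,j)` for naturals `n`. -/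
noncomputable def binomPoly (j : ℕ) : Polynomial ℝ :=
  Polynomial.C (1 / (j.factorial : ℝ)) *
    ∏ i ∈ Finset.range j, (Polynomial.X - Polynomial.C (i : ℝ))

/-- The polynomial `H_m = ∑_{j₁,j₂=0}^{k} p^{2m-j₁-j₂} z_{j₁} z_{j₂} b_{j₁}(m+X) b_{j₂}(m-X)`. -/
noncomputable def hPoly (k : ℕ) (p : ℝ) (z : ℕ → ℝ) (m : ℕ) : Polynomial ℝ :=
  ∑ j₁ ∈ Finset.range (k + 1), ∑ j₂ ∈ Finset.range (k + 1),
    Polynomial.C (p ^ (2 * m - j₁ - j₂) * z j₁ * z j₂) *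
      ((binomPoly j₁).comp (Polynomial.C (m : ℝ) + Polynomial.X)) *
      ((binomPoly j₂).comp (Polynomial.C (m : ℝ) - Polynomial.X))

section LinearSubstitution

variable {R : Type*} [CommRing R] [NoZeroDivisors R] (q : R[X]) (a : R)

theorem natDegree_comp_C_add_X : (q.comp (C a + X)).natDegree = q.natDegree := by
  nontriviality R
  rw [natDegree_comp, add_comm, natDegree_X_add_C, mul_one]

theorem leadingCoeff_comp_C_add_X : (q.comp (C a + X)).leadingCoeff = q.leadingCoeff := by
  nontriviality R
  rw [add_comm, leadingCoeff_comp (by rw [natDegree_X_add_C]; exact one_ne_zero),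
    (monic_X_add_C a).leadingCoeff, one_pow, mul_one]

theorem natDegree_comp_C_sub_X : (q.comp (C a - X)).natDegree = q.natDegree := by
  nontriviality R
  rw [natDegree_comp, ← neg_sub, natDegree_neg, natDegree_X_sub_C, mul_one]

theorem leadingCoeff_comp_C_sub_X :
    (q.comp (C a - X)).leadingCoeff = (-1) ^ q.natDegree * q.leadingCoeff := by
  nontriviality R
  rw [← neg_sub, leadingCoeff_comp (by rw [natDegree_neg, natDegree_X_sub_C]; exact one_ne_zero),
    leadingCoeff_neg, (monic_X_sub_C a).leadingCoeff, mul_comm]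

theorem natDegree_comp_C_add_X_mul_comp_C_sub_X (hq : q ≠ 0) :
    (q.comp (C a + X) * q.comp (C a - X)).natDegree = 2 * q.natDegree := by
  nontriviality R
  rw [natDegree_mul', natDegree_comp_C_add_X, natDegree_comp_C_sub_X, two_mul]
  rw [leadingCoeff_comp_C_add_X, leadingCoeff_comp_C_sub_X]
  exact mul_ne_zero (leadingCoeff_ne_zero.2 hq)
    (mul_ne_zero (pow_ne_zero _ (neg_ne_zero.2 one_ne_zero)) (leadingCoeff_ne_zero.2 hq))

theorem leadingCoeff_comp_C_add_X_mul_comp_C_sub_X :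
    (q.comp (C a + X) * q.comp (C a - X)).leadingCoeff
      = (-1) ^ q.natDegree * q.leadingCoeff ^ 2 := by
  rw [leadingCoeff_mul, leadingCoeff_comp_C_add_X, leadingCoeff_comp_C_sub_X]
  ring

end LinearSubstitution

namespace binomPoly

theorem natDegree_eq (j : ℕ) : (binomPoly j).natDegree = j := by
  rw [binomPoly, natDegree_C_mul (by positivity),
    natDegree_prod_of_monic _ _ fun _ _ => monic_X_sub_C _]
  simp only [natDegree_X_sub_C, sum_const, card_range, smul_eq_mul, mul_one]

theorem leadingCoeff_eq (j : ℕ) : (binomPoly j).leadingCoeff = (j.factorial : ℝ)⁻¹ := by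
  rw [binomPoly, leadingCoeff_mul, leadingCoeff_C,
    (monic_prod_of_monic _ _ fun _ _ => monic_X_sub_C _).leadingCoeff, mul_one, one_div]

theorem ne_zero (j : ℕ) : binomPoly j ≠ 0 := by
  rw [← leadingCoeff_ne_zero, leadingCoeff_eq]
  positivity

theorem degree_eq (j : ℕ) : (binomPoly j).degree = j := by
  rw [degree_eq_natDegree (ne_zero j), natDegree_eq]

theorem degree_sum_C_mul_lt (c : ℕ → ℝ) (n : ℕ) :
    (∑ j ∈ range n, C (c j) * binomPoly j).degree < n := by
  rw [← mem_degreeLT]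
  refine Submodule.sum_mem _ fun j hj => ?_
  rw [← smul_eq_C_mul]
  refine Submodule.smul_mem _ _ (mem_degreeLT.2 ?_)
  rw [degree_eq]
  exact_mod_cast mem_range.1 hj

variable {c : ℕ → ℝ} {n : ℕ}

theorem degree_sum_C_mul_lt_degree_C_mul (hc : c n ≠ 0) :
    (∑ j ∈ range n, C (c j) * binomPoly j).degree < (C (c n) * binomPoly n).degree := by
  rw [degree_C_mul hc, degree_eq]
  exact degree_sum_C_mul_lt c n

theorem natDegree_sum_C_mul (hc : c n ≠ 0) :
    (∑ j ∈ range (n + 1), C (c j) * binomPoly j).natDegree = n := by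
  rw [sum_range_succ, natDegree_add_eq_right_of_degree_lt (degree_sum_C_mul_lt_degree_C_mul hc),
    natDegree_C_mul hc, natDegree_eq]

theorem leadingCoeff_sum_C_mul (hc : c n ≠ 0) :
    (∑ j ∈ range (n + 1), C (c j) * binomPoly j).leadingCoeff = c n / n.factorial := by
  rw [sum_range_succ, leadingCoeff_add_of_degree_lt (degree_sum_C_mul_lt_degree_C_mul hc),
    leadingCoeff_mul, leadingCoeff_C, leadingCoeff_eq, div_eq_mul_inv]

end binomPoly

noncomputable def weightedBinomPoly (k : ℕ) (p : ℝ) (z : ℕ → ℝ) (m : ℕ) : ℝ[X] :=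
  ∑ j ∈ range (k + 1), C (p ^ (m - j) * z j) * binomPoly j

theorem hPoly_eq_mul {k m : ℕ} (hmk : k ≤ m) (p : ℝ) (z : ℕ → ℝ) :
    hPoly k p z m = (weightedBinomPoly k p z m).comp (C (m : ℝ) + X) *
      (weightedBinomPoly k p z m).comp (C (m : ℝ) - X) := by
  simp only [hPoly, weightedBinomPoly, Polynomial.sum_comp, sum_mul_sum, mul_comp, C_comp]
  refine sum_congr rfl fun j₁ hj₁ => sum_congr rfl fun j₂ hj₂ => ?_
  have hexp : 2 * m - j₁ - j₂ = (m - j₁) + (m - j₂) := by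
    have := mem_range.1 hj₁; have := mem_range.1 hj₂; omega
  simp only [hexp, pow_add, C_mul]
  ring

theorem weightedBinomPoly_eq_sum_range {k : ℕ} (p : ℝ) {z : ℕ → ℝ} (m : ℕ) {n : ℕ}
    (hnk : n ≤ k) (hz : ∀ j, n < j → j ≤ k → z j = 0) :
    weightedBinomPoly k p z m = ∑ j ∈ range (n + 1), C (p ^ (m - j) * z j) * binomPoly j := by
  refine (sum_subset (range_subset_range.2 (by omega)) fun j hjk hjn => ?_).symm
  rw [mem_range] at hjk hjn
  rw [hz j (by omega) (by omega), mul_zero, C_0, zero_mul]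

theorem hPoly_natDegree_leadingCoeff_general (k m : ℕ) (hmk : k ≤ m) (p : ℝ) (hp : 0 < p)
    (z : ℕ → ℝ)
    (jstar : ℕ) (hjk : jstar ≤ k) (hzj : z jstar ≠ 0)
    (hmax : ∀ j, jstar < j → j ≤ k → z j = 0) :
    (hPoly k p z m).natDegree = 2 * jstar ∧
    (hPoly k p z m).leadingCoeff
      = (-1) ^ jstar * ((jstar.factorial : ℝ))⁻¹ ^ 2 * p ^ (2 * m - 2 * jstar)
          * z jstar ^ 2 := by
  have hc : p ^ (m - jstar) * z jstar ≠ 0 := mul_ne_zero (pow_ne_zero _ hp.ne') hzj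
  have hg := weightedBinomPoly_eq_sum_range p m hjk hmax
  have hdeg : (weightedBinomPoly k p z m).natDegree = jstar := by
    rw [hg, binomPoly.natDegree_sum_C_mul hc]
  have hlc : (weightedBinomPoly k p z m).leadingCoeff
      = p ^ (m - jstar) * z jstar / jstar.factorial := by
    rw [hg, binomPoly.leadingCoeff_sum_C_mul hc]
  have hg0 : weightedBinomPoly k p z m ≠ 0 := by
    rw [← leadingCoeff_ne_zero, hlc]
    exact div_ne_zero hc (by positivity)
  rw [hPoly_eq_mul hmk, natDegree_comp_C_add_X_mul_comp_C_sub_X _ _ hg0,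
    leadingCoeff_comp_C_add_X_mul_comp_C_sub_X, hdeg, hlc, ← Nat.mul_sub, pow_mul]
  exact ⟨rfl, by ring⟩

/-- Equations (5.2)–(5.3) of the paper: `H_m` has degree `2·j*` and leading coefficient
`(-1)^{j*} (j*!)⁻² p^{2m-2j*} z_{j*}²`, where `j* = max{j ≤ k : z_j ≠ 0}`. -/
theorem hPoly_natDegree_leadingCoeff (k m : ℕ) (hmk : k ≤ m) (p : ℝ) (hp : 0 < p)
    (z : ℕ → ℝ) (hz : ∀ j ≤ k, 0 ≤ z j)
    (jstar : ℕ) (hjk : jstar ≤ k) (hzj : z jstar ≠ 0)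
    (hmax : ∀ j, jstar < j → j ≤ k → z j = 0) :
    (hPoly k p z m).natDegree = 2 * jstar ∧
    (hPoly k p z m).leadingCoeff
      = (-1) ^ jstar * ((jstar.factorial : ℝ))⁻¹ ^ 2 * p ^ (2 * m - 2 * jstar)
          * z jstar ^ 2 :=
  hPoly_natDegree_leadingCoeff_general k m hmk p hp z jstar hjk hzj hmax
end

section
/- Let k, m ∈ ℕ with m ≥ k, let p > 0 be a real number, and let z₀, z₁, …, z_k be nonnegative real numbers, not all zero. For j ∈ ℕ let b_j ∈ ℝ[X] be the binomial-coefficient polynomial b_j(T) := (1/j!) · ∏_{i=0}^{j−1} (T − i), and for each m' ≥ k define H_{m'} := ∑_{j₁=0}^{k} ∑_{j₂=0}^{k} p^{2m'−j₁−j₂} · z_{j₁} · z_{j₂} · b_{j₁}(m' + X) · b_{j₂}(m' − X) ∈ ℝ[X]. Then leadingCoeff(H_{m+1}) / leadingCoeff(H_m) = p². -/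
open Finset Polynomial

lemma natDegree_binomPoly (j : ℕ) : (binomPoly j).natDegree = j := by
  have hfac : (1 / (j.factorial : ℝ)) ≠ 0 := by positivity
  rw [binomPoly, natDegree_C_mul hfac, natDegree_prod]
  · simp only [natDegree_X_sub_C]
    simp
  · intro i _; exact X_sub_C_ne_zero _

lemma leadingCoeff_binomPoly (j : ℕ) :
    (binomPoly j).leadingCoeff = 1 / j.factorial := by
  rw [binomPoly, leadingCoeff_mul, leadingCoeff_C,
    (monic_prod_of_monic _ _ fun i _ => monic_X_sub_C _).leadingCoeff, mul_one]

lemma compA_natDegree (j : ℕ) (c : ℝ) :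
    ((binomPoly j).comp (C c + X)).natDegree = j := by
  rw [natDegree_comp, natDegree_binomPoly, add_comm (C c) X, natDegree_X_add_C, mul_one]

lemma compA_leadingCoeff (j : ℕ) (c : ℝ) :
    ((binomPoly j).comp (C c + X)).leadingCoeff = 1 / j.factorial := by
  rw [leadingCoeff_comp (by rw [add_comm (C c) X, natDegree_X_add_C]; norm_num),
    leadingCoeff_binomPoly]
  rw [add_comm (C c) X, (monic_X_add_C c).leadingCoeff, one_pow, mul_one]

lemma compB_natDegree (j : ℕ) (c : ℝ) :
    ((binomPoly j).comp (C c - X)).natDegree = j := by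
  have h : (C c - X : Polynomial ℝ) = -(X - C c) := by ring
  rw [natDegree_comp, natDegree_binomPoly, h, natDegree_neg, natDegree_X_sub_C, mul_one]

lemma compB_leadingCoeff (j : ℕ) (c : ℝ) :
    ((binomPoly j).comp (C c - X)).leadingCoeff = (-1) ^ j * (1 / j.factorial) := by
  have h : (C c - X : Polynomial ℝ) = -(X - C c) := by ring
  have hd : (C c - X : Polynomial ℝ).natDegree = 1 := by
    rw [h, natDegree_neg, natDegree_X_sub_C]
  rw [leadingCoeff_comp (by rw [hd]; norm_num), leadingCoeff_binomPoly,
    natDegree_binomPoly, h, leadingCoeff_neg, (monic_X_sub_C c).leadingCoeff]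
  ring

section Part2
variable (a c : ℝ) (j₁ j₂ n : ℕ)

lemma term_natDegree_le :
    (C a * (binomPoly j₁).comp (C c + X) * (binomPoly j₂).comp (C c - X)).natDegree
      ≤ j₁ + j₂ := by
  calc (C a * (binomPoly j₁).comp (C c + X) * (binomPoly j₂).comp (C c - X)).natDegree
      ≤ (C a * (binomPoly j₁).comp (C c + X)).natDegree
        + ((binomPoly j₂).comp (C c - X)).natDegree := natDegree_mul_le
    _ ≤ (C a).natDegree + ((binomPoly j₁).comp (C c + X)).natDegree
        + ((binomPoly j₂).comp (C c - X)).natDegree := by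
        gcongr; exact natDegree_mul_le
    _ = j₁ + j₂ := by rw [natDegree_C, compA_natDegree, compB_natDegree, zero_add]

lemma term_coeff_of_lt (h : j₁ + j₂ < n) :
    (C a * (binomPoly j₁).comp (C c + X) * (binomPoly j₂).comp (C c - X)).coeff n = 0 :=
  coeff_eq_zero_of_natDegree_lt (lt_of_le_of_lt (term_natDegree_le a c j₁ j₂) h)

lemma term_coeff_top :
    (C a * (binomPoly j₁).comp (C c + X) * (binomPoly j₂).comp (C c - X)).coeff (j₁ + j₂)
      = a * ((1 / j₁.factorial) * ((-1) ^ j₂ * (1 / j₂.factorial))) := by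
  rw [mul_assoc, coeff_C_mul]
  have := coeff_mul_degree_add_degree ((binomPoly j₁).comp (C c + X))
    ((binomPoly j₂).comp (C c - X))
  rw [compA_natDegree, compB_natDegree] at this
  rw [this, compA_leadingCoeff, compB_leadingCoeff]

end Part2

/-- Equation (5.4) of the paper: the ratio of the leading coefficients of `H_{m+1}`
and `H_m` recovers `p²`. -/
theorem hPoly_leadingCoeff_ratio (k m : ℕ) (hmk : k ≤ m) (p : ℝ) (hp : 0 < p)
    (z : ℕ → ℝ) (hz : ∀ j ≤ k, 0 ≤ z j) (hnz : ∃ j ≤ k, z j ≠ 0) :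
    (hPoly k p z (m + 1)).leadingCoeff / (hPoly k p z m).leadingCoeff = p ^ 2 := by
  classical
  set S := (Finset.range (k+1)).filter (fun j => z j ≠ 0) with hS
  have hSne : S.Nonempty := by
    obtain ⟨j, hj, hjz⟩ := hnz
    exact ⟨j, by simp [hS, Finset.mem_filter, Nat.lt_succ_iff, hj, hjz]⟩
  set J := S.max' hSne with hJdef
  have hJS : J ∈ S := S.max'_mem hSne
  have hJk : J ≤ k := by
    have := (Finset.mem_filter.1 hJS).1
    simp only [Finset.mem_range, Nat.lt_succ_iff] at this; exact this
  have hJz : z J ≠ 0 := (Finset.mem_filter.1 hJS).2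
  have hJmax : ∀ j ≤ k, z j ≠ 0 → j ≤ J := by
    intro j hj hjz
    exact S.le_max' j (Finset.mem_filter.2 ⟨Finset.mem_range.2 (by omega), hjz⟩)
  set cJ : ℝ := (1 / J.factorial) * ((-1) ^ J * (1 / J.factorial)) with hcJ
  have hcJne : cJ ≠ 0 := by
    have h1 : ((J.factorial : ℝ)) ≠ 0 := Nat.cast_ne_zero.2 J.factorial_ne_zero
    have h2 : ((-1 : ℝ)) ^ J ≠ 0 := pow_ne_zero _ (by norm_num)
    rw [hcJ]; positivity
  -- key coefficient computation
  have key : ∀ m' n : ℕ, 2 * J ≤ n →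
      (hPoly k p z m').coeff n =
        if n = 2 * J then p ^ (2 * m' - 2 * J) * z J * z J * cJ else 0 := by
    intro m' n hn
    rw [hPoly, finset_sum_coeff]
    have hmJ : J ∈ Finset.range (k+1) := Finset.mem_range.2 (by omega)
    have hterm : ∀ j₁ ∈ Finset.range (k+1), ∀ j₂ ∈ Finset.range (k+1),
        (Polynomial.C (p ^ (2 * m' - j₁ - j₂) * z j₁ * z j₂) *
          ((binomPoly j₁).comp (Polynomial.C (m' : ℝ) + Polynomial.X)) *
          ((binomPoly j₂).comp (Polynomial.C (m' : ℝ) - Polynomial.X))).coeff n =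
        if j₂ = J then (if j₁ = J then
          (if n = 2 * J then p ^ (2 * m' - 2 * J) * z J * z J * cJ else 0) else 0) else 0 := by
      intro j₁ hj₁ j₂ hj₂
      rw [Finset.mem_range, Nat.lt_succ_iff] at hj₁ hj₂
      by_cases hz₁ : z j₁ = 0
      · have hj1J : j₁ ≠ J := fun h => hJz (h ▸ hz₁)
        rw [hz₁]; simp [hj1J]
      by_cases hz₂ : z j₂ = 0
      · have hj2J : j₂ ≠ J := fun h => hJz (h ▸ hz₂)
        rw [hz₂]; simp [hj2J]
      have hle₁ : j₁ ≤ J := hJmax j₁ hj₁ hz₁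
      have hle₂ : j₂ ≤ J := hJmax j₂ hj₂ hz₂
      by_cases hlt : j₁ + j₂ < n
      · rw [term_coeff_of_lt _ _ _ _ _ hlt]
        split_ifs <;> first | (exfalso; omega) | rfl
      · have h1 : j₁ = J := by omega
        have h2 : j₂ = J := by omega
        subst h1; subst h2
        rw [show n = J + J by omega, term_coeff_top,
          if_pos rfl, if_pos rfl, if_pos (by omega : J + J = 2 * J)]
        have he : 2 * m' - J - J = 2 * m' - 2 * J := by omega
        rw [he, hcJ]
    rw [Finset.sum_congr rfl (fun j₁ hj₁ => by
      rw [finset_sum_coeff, Finset.sum_congr rfl (fun j₂ hj₂ => hterm j₁ hj₁ j₂ hj₂),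
        Finset.sum_ite_eq' (Finset.range (k+1)) J, if_pos hmJ])]
    rw [Finset.sum_ite_eq' (Finset.range (k+1)) J, if_pos hmJ]
  -- leading coefficient
  have hlc : ∀ m', (hPoly k p z m').leadingCoeff =
      p ^ (2 * m' - 2 * J) * z J * z J * cJ := by
    intro m'
    have hpne : p ≠ 0 := ne_of_gt hp
    have hcne : p ^ (2 * m' - 2 * J) * z J * z J * cJ ≠ 0 := by
      exact mul_ne_zero (mul_ne_zero (mul_ne_zero (pow_ne_zero _ hpne) hJz) hJz) hcJne
    have h1 : (hPoly k p z m').coeff (2 * J) =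
        p ^ (2 * m' - 2 * J) * z J * z J * cJ := by
      rw [key m' (2 * J) le_rfl, if_pos rfl]
    have hdeg_le : (hPoly k p z m').natDegree ≤ 2 * J := by
      rw [natDegree_le_iff_coeff_eq_zero]
      intro n hn
      rw [key m' n hn.le, if_neg (by omega)]
    have hdeg_ge : 2 * J ≤ (hPoly k p z m').natDegree :=
      le_natDegree_of_ne_zero (h1 ▸ hcne)
    rw [Polynomial.leadingCoeff, le_antisymm hdeg_le hdeg_ge, h1]
  rw [hlc (m+1), hlc m]
  have hpne : p ≠ 0 := ne_of_gt hp
  have hcne : p ^ (2 * m - 2 * J) * z J * z J * cJ ≠ 0 :=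
    mul_ne_zero (mul_ne_zero (mul_ne_zero (pow_ne_zero _ hpne) hJz) hJz) hcJne
  have hexp : p ^ (2 * (m+1) - 2 * J) = p ^ (2 * m - 2 * J) * p ^ 2 := by
    rw [← pow_add]; congr 1; omega
  rw [hexp, div_eq_iff hcne]; ring
end

section
/- Let k ∈ ℕ, let p be a real number with 0 < p ≤ 1, and let z₀, z₁, …, z_k be nonnegative real numbers with z₀ > 0. Define g : ℕ → ℝ by g(n) := ∑_{j=0}^{k} C(n,j) · p^{n−j} · z_j (with C(n,j) = 0 for j > n), and for naturals ℓ ≤ m define D_ℓ(m) := ∑_{i=0}^{ℓ} (−1)^{ℓ−i} · C(ℓ,i) · g(m+i) · g(m−i). Let j* := max{ j ∈ {0,…,k} : z_j ≠ 0 }. Then: (i) D_ℓ(2k) = 0 for every ℓ with 2j* < ℓ ≤ 2k; (ii) D_{2j*}(2k) ≠ 0; and (iii) D_{2j*}(2k+1) / D_{2j*}(2k) = p². -/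
/-!
For `p ≠ 0` we have `g n = p ^ n * G n`, where `G = ∑_{j ≤ j*} (z_j / p ^ j) · C(X, j)` is a
polynomial of degree `j*` with leading coefficient `z_{j*} / (p ^ {j*} j*!) ≠ 0`. So for
`x ≤ m`, `g(m+x) g(m-x) = p ^ {2m} G(m+x) G(m-x)`, and `x ↦ G(m+x) G(m-x)` is a polynomial of
degree `2j*` whose leading coefficient `(-1) ^ {j*} lc(G) ^ 2` does not depend on `m`. The
`ℓ`-th finite difference of a polynomial of degree `≤ ℓ` is `ℓ!` times its `ℓ`-th coefficient,
hence `D_ℓ(m) = 0` for `ℓ > 2j*` and `D_{2j*}(m) = p ^ {2m} c` with `c ≠ 0` independent of `m`.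
-/

open Finset

/-- `g(n) = ∑_{j=0}^{k} C(n,j) p^{n-j} z_j`. -/
noncomputable def gFun (k : ℕ) (p : ℝ) (z : ℕ → ℝ) (n : ℕ) : ℝ :=
  ∑ j ∈ Finset.range (k + 1), (n.choose j : ℝ) * p ^ (n - j) * z j

/-- `D_ℓ(m) = ∑_{i=0}^{ℓ} (-1)^{ℓ-i} C(ℓ,i) g(m+i) g(m-i)`, the `ℓ`-th finite difference
at 0 of `x ↦ g(m+x)·g(m-x)`. -/
noncomputable def dFun (k : ℕ) (p : ℝ) (z : ℕ → ℝ) (ℓ m : ℕ) : ℝ :=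
  ∑ i ∈ Finset.range (ℓ + 1),
    (-1 : ℝ) ^ (ℓ - i) * (ℓ.choose i : ℝ) * gFun k p z (m + i) * gFun k p z (m - i)

open Polynomial Nat

namespace Polynomial

theorem sum_range_alternating_choose_mul_eval {R : Type*} [CommRing R] (P : R[X]) {n : ℕ}
    (hP : P.natDegree ≤ n) :
    ∑ i ∈ range (n + 1), (-1 : R) ^ (n - i) * n.choose i * P.eval (i : R) =
      n ! * P.coeff n := by
  have hsum := fwdDiff_iter_eq_sum_shift (h := (1 : R)) P.eval n 0
  simp only [zero_add, nsmul_one, zsmul_eq_mul, Int.cast_mul, Int.cast_pow, Int.cast_neg,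
    Int.cast_one, Int.cast_natCast] at hsum
  rw [← hsum]
  rcases hP.lt_or_eq with hlt | rfl
  · rw [fwdDiff_iter_eq_zero_of_degree_lt hlt, coeff_eq_zero_of_natDegree_lt hlt]
    simp
  · rw [fwdDiff_iter_degree_eq_factorial]
    simp [mul_comm]

section Field

variable {K : Type*} [Field K] [CharZero K]

noncomputable def choosePoly (j : ℕ) : K[X] := C (j ! : K)⁻¹ * descPochhammer K j

theorem choosePoly_eval_natCast (j n : ℕ) : (choosePoly j : K[X]).eval (n : K) = n.choose j := by
  have hj : (j ! : K) ≠ 0 := by exact_mod_cast j.factorial_ne_zero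
  rw [choosePoly, eval_mul, eval_C, descPochhammer_eval_eq_descFactorial,
    Nat.descFactorial_eq_factorial_mul_choose]
  push_cast
  field_simp

theorem natDegree_choosePoly (j : ℕ) : (choosePoly j : K[X]).natDegree = j := by
  rw [choosePoly, natDegree_C_mul (by simp [j.factorial_ne_zero]), descPochhammer_natDegree]

theorem coeff_choosePoly_self (j : ℕ) : (choosePoly j : K[X]).coeff j = (j ! : K)⁻¹ := by
  nth_rw 2 [← natDegree_choosePoly (K := K) j]
  rw [coeff_natDegree, choosePoly, leadingCoeff_mul, leadingCoeff_C,
    (monic_descPochhammer K j).leadingCoeff, mul_one]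

noncomputable def chooseCombination (c : ℕ → K) (d : ℕ) : K[X] :=
  ∑ j ∈ range (d + 1), C (c j) * choosePoly j

theorem chooseCombination_eval_natCast (c : ℕ → K) (d n : ℕ) :
    (chooseCombination c d).eval (n : K) = ∑ j ∈ range (d + 1), c j * n.choose j := by
  simp [chooseCombination, eval_finsetSum, choosePoly_eval_natCast]

theorem natDegree_chooseCombination_le (c : ℕ → K) (d : ℕ) :
    (chooseCombination c d).natDegree ≤ d :=
  natDegree_sum_le_of_forall_le _ _ fun j hj =>
    (natDegree_C_mul_le _ _).trans <| (natDegree_choosePoly j).trans_le <|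
      Nat.lt_succ_iff.mp (mem_range.mp hj)

theorem coeff_chooseCombination (c : ℕ → K) (d : ℕ) :
    (chooseCombination c d).coeff d = c d * (d ! : K)⁻¹ := by
  rw [chooseCombination, finsetSum_coeff, sum_range_succ, sum_eq_zero, zero_add, coeff_C_mul,
    coeff_choosePoly_self]
  intro j hj
  rw [coeff_C_mul,
    coeff_eq_zero_of_natDegree_lt (by rw [natDegree_choosePoly]; exact mem_range.mp hj), mul_zero]

end Field

section CommRing

variable {R : Type*} [CommRing R]

noncomputable def centeredProduct (P : R[X]) (a : R) : R[X] :=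
  P.comp (C a + X) * P.comp (C a - X)

theorem eval_centeredProduct (P : R[X]) (a x : R) :
    (centeredProduct P a).eval x = P.eval (a + x) * P.eval (a - x) := by
  simp [centeredProduct]

theorem natDegree_C_sub_X [Nontrivial R] (a : R) : (C a - X).natDegree = 1 := by
  rw [← neg_sub, natDegree_neg, natDegree_X_sub_C]

theorem leadingCoeff_centeredProduct [IsDomain R] (P : R[X]) (a : R) :
    (centeredProduct P a).leadingCoeff = (-1) ^ P.natDegree * P.leadingCoeff ^ 2 := by
  rw [centeredProduct, leadingCoeff_mul,
    leadingCoeff_comp (by rw [add_comm, natDegree_X_add_C]; exact one_ne_zero),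
    leadingCoeff_comp (by rw [natDegree_C_sub_X]; exact one_ne_zero), add_comm,
    leadingCoeff_X_add_C, ← neg_sub, leadingCoeff_neg, leadingCoeff_X_sub_C]
  ring

theorem natDegree_centeredProduct [IsDomain R] (P : R[X]) (a : R) :
    (centeredProduct P a).natDegree = 2 * P.natDegree := by
  rcases eq_or_ne P 0 with rfl | hP
  · simp [centeredProduct]
  have hne : centeredProduct P a ≠ 0 := by
    rw [← leadingCoeff_ne_zero, leadingCoeff_centeredProduct]
    exact mul_ne_zero (pow_ne_zero _ (neg_ne_zero.mpr one_ne_zero))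
      (pow_ne_zero _ (leadingCoeff_ne_zero.mpr hP))
  rw [centeredProduct] at hne ⊢
  rw [natDegree_mul (left_ne_zero_of_mul hne) (right_ne_zero_of_mul hne), natDegree_comp,
    natDegree_comp, add_comm (C a), natDegree_X_add_C, natDegree_C_sub_X]
  ring

theorem coeff_two_mul_centeredProduct [IsDomain R] {P : R[X]} {d : ℕ} (hP : P.natDegree ≤ d)
    (a : R) : (centeredProduct P a).coeff (2 * d) = (-1) ^ d * P.coeff d ^ 2 := by
  rcases hP.lt_or_eq with hlt | rfl
  · rw [coeff_eq_zero_of_natDegree_lt hlt, coeff_eq_zero_of_natDegree_lt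
      (by rw [natDegree_centeredProduct]; omega)]
    simp
  · rw [← natDegree_centeredProduct P a, coeff_natDegree, leadingCoeff_centeredProduct]
    rfl

end CommRing

end Polynomial

section Recovery

variable {k : ℕ} {p : ℝ} {z : ℕ → ℝ} {jstar : ℕ}

theorem gFun_eq_pow_mul_eval (hp : p ≠ 0) (hjk : jstar ≤ k)
    (hmax : ∀ j, jstar < j → j ≤ k → z j = 0) (n : ℕ) :
    gFun k p z n = p ^ n * (chooseCombination (fun j => z j / p ^ j) jstar).eval (n : ℝ) := by
  have hterm : ∀ j,
      (n.choose j : ℝ) * p ^ (n - j) * z j = p ^ n * (z j / p ^ j * n.choose j) := by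
    intro j
    rcases le_or_gt j n with hjn | hnj
    · rw [pow_sub₀ p hp hjn]
      field_simp
    · simp [Nat.choose_eq_zero_of_lt hnj]
  rw [chooseCombination_eval_natCast, mul_sum, gFun,
    ← sum_subset (range_subset_range.mpr (by omega : jstar + 1 ≤ k + 1))]
  · exact sum_congr rfl fun j _ => hterm j
  · intro j hj hj'
    rw [hmax j (by simpa using hj') (by simpa [Nat.lt_succ_iff] using hj), mul_zero]

theorem dFun_eq_mul_factorial_mul_coeff (hp : p ≠ 0) (hjk : jstar ≤ k)
    (hmax : ∀ j, jstar < j → j ≤ k → z j = 0) {ℓ m : ℕ} (hjℓ : 2 * jstar ≤ ℓ)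
    (hℓm : ℓ ≤ m) :
    dFun k p z ℓ m = p ^ (2 * m) * (ℓ ! *
      (centeredProduct (chooseCombination (fun j => z j / p ^ j) jstar) (m : ℝ)).coeff ℓ) := by
  set G := chooseCombination (fun j => z j / p ^ j) jstar
  have hG : (centeredProduct G (m : ℝ)).natDegree ≤ ℓ := by
    rw [natDegree_centeredProduct]
    have hGd : G.natDegree ≤ jstar := natDegree_chooseCombination_le _ _
    omega
  rw [← sum_range_alternating_choose_mul_eval _ hG, dFun, mul_sum]
  refine sum_congr rfl fun i hi => ?_
  have him : i ≤ m := (Nat.lt_succ_iff.mp (mem_range.mp hi)).trans hℓm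
  rw [gFun_eq_pow_mul_eval hp hjk hmax, gFun_eq_pow_mul_eval hp hjk hmax, eval_centeredProduct,
    Nat.cast_add, Nat.cast_sub him]
  rw [show 2 * m = (m + i) + (m - i) by omega, pow_add]
  ring

theorem dFun_eq_zero_of_lt (hp : p ≠ 0) (hjk : jstar ≤ k)
    (hmax : ∀ j, jstar < j → j ≤ k → z j = 0) {ℓ m : ℕ} (hjℓ : 2 * jstar < ℓ)
    (hℓm : ℓ ≤ m) :
    dFun k p z ℓ m = 0 := by
  have hGd := natDegree_chooseCombination_le (fun j => z j / p ^ j) jstar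
  rw [dFun_eq_mul_factorial_mul_coeff hp hjk hmax hjℓ.le hℓm,
    coeff_eq_zero_of_natDegree_lt (by rw [natDegree_centeredProduct]; omega), mul_zero, mul_zero]

theorem dFun_two_mul_eq (hp : p ≠ 0) (hjk : jstar ≤ k)
    (hmax : ∀ j, jstar < j → j ≤ k → z j = 0) {m : ℕ} (hm : 2 * jstar ≤ m) :
    dFun k p z (2 * jstar) m = p ^ (2 * m) *
      ((2 * jstar)! * ((-1) ^ jstar * (z jstar / p ^ jstar * (jstar ! : ℝ)⁻¹) ^ 2)) := by
  rw [dFun_eq_mul_factorial_mul_coeff hp hjk hmax le_rfl hm,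
    coeff_two_mul_centeredProduct (natDegree_chooseCombination_le _ _), coeff_chooseCombination]

end Recovery

theorem finite_differences_recover_p_general (k : ℕ) (p : ℝ) (hp0 : 0 < p)
    (z : ℕ → ℝ)
    (jstar : ℕ) (hjk : jstar ≤ k) (hzj : z jstar ≠ 0)
    (hmax : ∀ j, jstar < j → j ≤ k → z j = 0) :
    (∀ ℓ : ℕ, 2 * jstar < ℓ → ℓ ≤ 2 * k → dFun k p z ℓ (2 * k) = 0) ∧
    dFun k p z (2 * jstar) (2 * k) ≠ 0 ∧
    dFun k p z (2 * jstar) (2 * k + 1) / dFun k p z (2 * jstar) (2 * k) = p ^ 2 := by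
  have hp : p ≠ 0 := hp0.ne'
  have hden : dFun k p z (2 * jstar) (2 * k) ≠ 0 := by
    rw [dFun_two_mul_eq hp hjk hmax (by omega)]
    simp [hp, hzj, Nat.factorial_ne_zero]
  refine ⟨fun ℓ hjℓ hℓk => dFun_eq_zero_of_lt hp hjk hmax hjℓ hℓk, hden, ?_⟩
  rw [div_eq_iff hden, dFun_two_mul_eq hp hjk hmax (by omega),
    dFun_two_mul_eq hp hjk hmax (by omega)]
  ring

/-- Lemma 5.10 (mathematical core of Algorithm 2): with `j* = max{j ≤ k : z_j ≠ 0}`,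
(i) `D_ℓ(2k) = 0` for `2j* < ℓ ≤ 2k`; (ii) `D_{2j*}(2k) ≠ 0`;
(iii) `D_{2j*}(2k+1) / D_{2j*}(2k) = p²`. -/
theorem finite_differences_recover_p (k : ℕ) (p : ℝ) (hp0 : 0 < p) (hp1 : p ≤ 1)
    (z : ℕ → ℝ) (hz : ∀ j ≤ k, 0 ≤ z j) (hz0 : 0 < z 0)
    (jstar : ℕ) (hjk : jstar ≤ k) (hzj : z jstar ≠ 0)
    (hmax : ∀ j, jstar < j → j ≤ k → z j = 0) :
    (∀ ℓ : ℕ, 2 * jstar < ℓ → ℓ ≤ 2 * k → dFun k p z ℓ (2 * k) = 0) ∧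
    dFun k p z (2 * jstar) (2 * k) ≠ 0 ∧
    dFun k p z (2 * jstar) (2 * k + 1) / dFun k p z (2 * jstar) (2 * k) = p ^ 2 :=
  finite_differences_recover_p_general k p hp0 z jstar hjk hzj hmax
end
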